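/- Lemma 8: Let 1 ≤ n ≤ N with N ≥ 2, and let j₁ ≠ j₂ with 1 ≤ j₁, j₂ ≤ n. Then ∑_{(w_1,…,w_n) ∈ W^n} f(w_{j₁}) f(w_{j₂}) · ∏_{m=1}^{n} (l^{(w_1,…,w_{m−1})}(w_m)/(N−m+1)) = −σ₁²/(N−1), where σ₁² = ∑_{w∈W} f(w)² l(w)/N. -/
import Mathlib


/-- The number of cards remaining, `N = ∑ w ∈ W, l w`, for a deck described by a
finite set `W ⊆ ℝ` of weights and a count function `l`. -/
def deckSize (W : Finset ℝ) (l : ℝ → ℤ) : ℤ := ∑ w ∈ W, l w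

/-- The running count `R = -∑ w ∈ W, w · l w`. -/
noncomputable def runningCount (W : Finset ℝ) (l : ℝ → ℤ) : ℝ :=
  -∑ w ∈ W, w * (l w : ℝ)

/-- `f(w) = (R + w)/(N - 1) - R/N`, the change of the true count upon removing one
card of weight `w`. -/
noncomputable def tcChange (W : Finset ℝ) (l : ℝ → ℤ) (w : ℝ) : ℝ :=
  (runningCount W l + w) / ((deckSize W l : ℝ) - 1) -
    runningCount W l / (deckSize W l : ℝ)

/-- The depleted count: `l^s(v) = l(v) - #{i : s_i = v}`. -/
noncomputable def depletedCount (l : ℝ → ℤ) (s : List ℝ) (v : ℝ) : ℤ :=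
  l v - s.count v

/-- deplete one card of weight v -/
noncomputable def dep (l : ℝ → ℤ) (v : ℝ) : ℝ → ℤ := fun x => l x - if x = v then 1 else 0

noncomputable def probProd (W : Finset ℝ) (l : ℝ → ℤ) (n : ℕ) (w : Fin n → ℝ) : ℝ :=
  ∏ m : Fin n,
    ((depletedCount l ((List.ofFn w).take m) (w m) : ℝ) /
      ((deckSize W l : ℝ) - ((m : ℕ) : ℝ)))

lemma deckSize_dep {W : Finset ℝ} {l : ℝ → ℤ} {v : ℝ} (hv : v ∈ W) :
    deckSize W (dep l v) = deckSize W l - 1 := by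
  simp [deckSize, dep, Finset.sum_sub_distrib, Finset.sum_ite_eq', hv]

lemma depletedCount_cons (l : ℝ → ℤ) (v : ℝ) (s : List ℝ) (u : ℝ) :
    depletedCount l (v :: s) u = depletedCount (dep l v) s u := by
  simp only [depletedCount, dep, List.count_cons]
  rcases eq_or_ne u v with h | h
  · simp only [h, if_pos rfl, beq_self_eq_true, if_true]
    push_cast; ring
  · simp only [if_neg h, beq_iff_eq, if_neg (Ne.symm h)]
    push_cast; ring

lemma probProd_cons (W : Finset ℝ) (l : ℝ → ℤ) {v : ℝ} (hv : v ∈ W) (n : ℕ)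
    (w : Fin n → ℝ) :
    probProd W l (n+1) (Fin.cons v w)
      = ((l v : ℝ) / (deckSize W l : ℝ)) * probProd W (dep l v) n w := by
  rw [probProd, Fin.prod_univ_succ]
  have h0 : (List.ofFn (Fin.cons v w : Fin (n+1) → ℝ)) = v :: List.ofFn w := by
    simp [List.ofFn_succ]
  congr 1
  · simp [depletedCount]
  · rw [probProd]
    refine Finset.prod_congr rfl fun m _ => ?_
    rw [h0]
    have : ((m.succ : Fin (n+1)) : ℕ) = (m : ℕ) + 1 := rfl
    rw [this]
    simp only [Fin.cons_succ, List.take_succ_cons, depletedCount_cons, deckSize_dep hv]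
    push_cast
    ring_nf

lemma sum_piFinset_cons {M : Type*} [AddCommMonoid M] (W : Finset ℝ) (n : ℕ)
    (F : (Fin (n+1) → ℝ) → M) :
    ∑ w ∈ Fintype.piFinset (fun _ : Fin (n+1) => W), F w
      = ∑ v ∈ W, ∑ w ∈ Fintype.piFinset (fun _ : Fin n => W), F (Fin.cons v w) := by
  rw [← Finset.sum_product']
  refine Finset.sum_nbij' (fun w => (w 0, Fin.tail w)) (fun p => Fin.cons p.1 p.2) ?_ ?_ ?_ ?_ ?_
  · intro w hw
    simp only [Fintype.mem_piFinset] at hw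
    simp [Finset.mem_product, Fintype.mem_piFinset, Fin.tail, hw]
  · intro p hp
    simp only [Finset.mem_product, Fintype.mem_piFinset] at hp
    simp only [Fintype.mem_piFinset]
    intro i
    refine Fin.cases ?_ ?_ i <;> simp [hp.1, hp.2]
  · intro w _; exact Fin.cons_self_tail w
  · intro p _; simp
  · intro w _; rw [Fin.cons_self_tail]

lemma deckSize_cast (W : Finset ℝ) (l : ℝ → ℤ) :
    ((deckSize W l : ℤ) : ℝ) = ∑ v ∈ W, (l v : ℝ) := by
  simp [deckSize]

lemma probProd_total (W : Finset ℝ) : ∀ (n : ℕ) (l : ℝ → ℤ), (n : ℤ) ≤ deckSize W l →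
    ∑ w ∈ Fintype.piFinset (fun _ : Fin n => W), probProd W l n w = 1 := by
  intro n
  induction n with
  | zero =>
    intro l _
    simp [probProd]
  | succ n ih =>
    intro l hl
    have hNpos : (0 : ℤ) < deckSize W l := by push_cast at hl; omega
    have hN0 : (deckSize W l : ℝ) ≠ 0 := by exact_mod_cast hNpos.ne'
    rw [sum_piFinset_cons]
    have h1 : ∀ v ∈ W, (∑ w ∈ Fintype.piFinset (fun _ : Fin n => W),
        probProd W l (n+1) (Fin.cons v w)) = (l v : ℝ) / (deckSize W l : ℝ) := by
      intro v hv
      rw [Finset.sum_congr rfl (fun w _ => probProd_cons W l hv n w), ← Finset.mul_sum,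
        ih (dep l v) (by rw [deckSize_dep hv]; push_cast at hl ⊢; omega), mul_one]
    rw [Finset.sum_congr rfl h1, ← Finset.sum_div, ← deckSize_cast, div_self hN0]

lemma sum_mul_dep (W : Finset ℝ) (l : ℝ → ℤ) (f : ℝ → ℝ) {v : ℝ} (hv : v ∈ W) :
    ∑ u ∈ W, f u * ((dep l v u : ℤ) : ℝ) = (∑ u ∈ W, f u * (l u : ℝ)) - f v := by
  simp only [dep]
  push_cast
  simp [mul_sub, Finset.sum_sub_distrib, mul_ite, Finset.sum_ite_eq', hv]

lemma probProd_marginal1 (W : Finset ℝ) : ∀ (n : ℕ) (l : ℝ → ℤ) (f : ℝ → ℝ) (j : Fin n),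
    (n : ℤ) ≤ deckSize W l →
    ∑ w ∈ Fintype.piFinset (fun _ : Fin n => W), f (w j) * probProd W l n w
      = (∑ v ∈ W, f v * (l v : ℝ)) / (deckSize W l : ℝ) := by
  intro n
  induction n with
  | zero => intro l f j hl; exact j.elim0
  | succ n ih =>
    intro l f j hl
    have hNpos : (0 : ℤ) < deckSize W l := by push_cast at hl; omega
    have hN0 : (deckSize W l : ℝ) ≠ 0 := by exact_mod_cast hNpos.ne'
    set N : ℝ := (deckSize W l : ℝ) with hNdef
    rcases Fin.eq_zero_or_eq_succ j with rfl | ⟨i, rfl⟩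
    · rw [sum_piFinset_cons]
      have h1 : ∀ v ∈ W, (∑ w ∈ Fintype.piFinset (fun _ : Fin n => W),
          f ((Fin.cons v w : Fin (n+1) → ℝ) 0) * probProd W l (n+1) (Fin.cons v w))
            = f v * (l v : ℝ) / N := by
        intro v hv
        have : ∀ w ∈ Fintype.piFinset (fun _ : Fin n => W),
            f ((Fin.cons v w : Fin (n+1) → ℝ) 0) * probProd W l (n+1) (Fin.cons v w)
              = f v * ((l v : ℝ) / N) * probProd W (dep l v) n w := by
          intro w _
          rw [Fin.cons_zero, probProd_cons W l hv]; ring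
        rw [Finset.sum_congr rfl this, ← Finset.mul_sum,
          probProd_total W n (dep l v) (by rw [deckSize_dep hv]; push_cast at hl ⊢; omega),
          mul_one, mul_div_assoc]
      rw [Finset.sum_congr rfl h1, ← Finset.sum_div]
    · -- j = i.succ
      have hn1 : 0 < n := i.pos
      have hN1 : N - 1 ≠ 0 := by
        have : (2 : ℤ) ≤ deckSize W l := by push_cast at hl; omega
        have h2 : (2 : ℝ) ≤ N := by rw [hNdef]; exact_mod_cast this
        intro h; nlinarith
      set A : ℝ := ∑ v ∈ W, f v * (l v : ℝ) with hA
      rw [sum_piFinset_cons]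
      have h1 : ∀ v ∈ W, (∑ w ∈ Fintype.piFinset (fun _ : Fin n => W),
          f ((Fin.cons v w : Fin (n+1) → ℝ) i.succ) * probProd W l (n+1) (Fin.cons v w))
            = (l v : ℝ) * (A - f v) / (N * (N - 1)) := by
        intro v hv
        have step : ∀ w ∈ Fintype.piFinset (fun _ : Fin n => W),
            f ((Fin.cons v w : Fin (n+1) → ℝ) i.succ) * probProd W l (n+1) (Fin.cons v w)
              = ((l v : ℝ) / N) * (f (w i) * probProd W (dep l v) n w) := by
          intro w _
          rw [Fin.cons_succ, probProd_cons W l hv]; ring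
        rw [Finset.sum_congr rfl step, ← Finset.mul_sum,
          ih (dep l v) f i (by rw [deckSize_dep hv]; push_cast at hl ⊢; omega),
          sum_mul_dep W l f hv, deckSize_dep hv]
        push_cast
        rw [← hNdef, ← hA]
        field_simp
        try ring
      rw [Finset.sum_congr rfl h1, ← Finset.sum_div]
      have hsum : ∑ v ∈ W, (l v : ℝ) * (A - f v) = (N - 1) * A := by
        have e : ∀ v ∈ W, (l v : ℝ) * (A - f v) = A * (l v : ℝ) - f v * (l v : ℝ) :=
          fun v _ => by ring
        rw [Finset.sum_congr rfl e, Finset.sum_sub_distrib, ← Finset.mul_sum, ← deckSize_cast,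
          ← hNdef, ← hA]
        ring
      rw [hsum, mul_comm N (N - 1), mul_div_mul_left _ _ hN1]

lemma probProd_marginal2 (W : Finset ℝ) : ∀ (n : ℕ) (l : ℝ → ℤ) (f g : ℝ → ℝ)
    (j₁ j₂ : Fin n), j₁ ≠ j₂ → (n : ℤ) ≤ deckSize W l →
    ∑ w ∈ Fintype.piFinset (fun _ : Fin n => W),
        (f (w j₁) * g (w j₂)) * probProd W l n w
      = ((∑ v ∈ W, f v * (l v : ℝ)) * (∑ v ∈ W, g v * (l v : ℝ))
          - ∑ v ∈ W, f v * g v * (l v : ℝ)) /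
        ((deckSize W l : ℝ) * ((deckSize W l : ℝ) - 1)) := by
  intro n
  induction n with
  | zero => intro l f g j₁ j₂ hj hl; exact j₁.elim0
  | succ n ih =>
    intro l f g j₁ j₂ hj hl
    have hNpos : (0 : ℤ) < deckSize W l := by push_cast at hl; omega
    have hN0 : (deckSize W l : ℝ) ≠ 0 := by exact_mod_cast hNpos.ne'
    set N : ℝ := (deckSize W l : ℝ) with hNdef
    set A : ℝ := ∑ v ∈ W, f v * (l v : ℝ) with hA
    set B : ℝ := ∑ v ∈ W, g v * (l v : ℝ) with hB
    set C : ℝ := ∑ v ∈ W, f v * g v * (l v : ℝ) with hC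
    have hdep : ∀ v ∈ W, (n : ℤ) ≤ deckSize W (dep l v) := by
      intro v hv; rw [deckSize_dep hv]; push_cast at hl ⊢; omega
    rcases Fin.eq_zero_or_eq_succ j₁ with rfl | ⟨i₁, rfl⟩ <;>
      rcases Fin.eq_zero_or_eq_succ j₂ with rfl | ⟨i₂, rfl⟩
    · exact absurd rfl hj
    · -- j₁ = 0, j₂ = i₂.succ
      have hN1 : N - 1 ≠ 0 := by
        have h2 : (2 : ℤ) ≤ deckSize W l := by
          have := i₂.pos; push_cast at hl; omega
        have h2' : (2 : ℝ) ≤ N := by rw [hNdef]; exact_mod_cast h2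
        intro h; nlinarith
      rw [sum_piFinset_cons]
      have h1 : ∀ v ∈ W, (∑ w ∈ Fintype.piFinset (fun _ : Fin n => W),
          (f ((Fin.cons v w : Fin (n+1) → ℝ) 0) * g ((Fin.cons v w : Fin (n+1) → ℝ) i₂.succ))
            * probProd W l (n+1) (Fin.cons v w))
            = (l v : ℝ) * (f v * (B - g v)) / (N * (N - 1)) := by
        intro v hv
        have step : ∀ w ∈ Fintype.piFinset (fun _ : Fin n => W),
            (f ((Fin.cons v w : Fin (n+1) → ℝ) 0) * g ((Fin.cons v w : Fin (n+1) → ℝ) i₂.succ))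
              * probProd W l (n+1) (Fin.cons v w)
              = ((l v : ℝ) / N * f v) * (g (w i₂) * probProd W (dep l v) n w) := by
          intro w _
          rw [Fin.cons_zero, Fin.cons_succ, probProd_cons W l hv]; ring
        rw [Finset.sum_congr rfl step, ← Finset.mul_sum,
          probProd_marginal1 W n (dep l v) g i₂ (hdep v hv),
          sum_mul_dep W l g hv, deckSize_dep hv]
        push_cast
        rw [← hNdef, ← hB]
        field_simp
        try ring
      rw [Finset.sum_congr rfl h1, ← Finset.sum_div]
      have hsum : ∑ v ∈ W, (l v : ℝ) * (f v * (B - g v)) = A * B - C := by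
        have e : ∀ v ∈ W, (l v : ℝ) * (f v * (B - g v))
            = B * (f v * (l v : ℝ)) - f v * g v * (l v : ℝ) := fun v _ => by ring
        rw [Finset.sum_congr rfl e, Finset.sum_sub_distrib, ← Finset.mul_sum, ← hA, ← hC]
        ring
      rw [hsum]
    · -- j₁ = i₁.succ, j₂ = 0
      have hN1 : N - 1 ≠ 0 := by
        have h2 : (2 : ℤ) ≤ deckSize W l := by
          have := i₁.pos; push_cast at hl; omega
        have h2' : (2 : ℝ) ≤ N := by rw [hNdef]; exact_mod_cast h2
        intro h; nlinarith
      rw [sum_piFinset_cons]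
      have h1 : ∀ v ∈ W, (∑ w ∈ Fintype.piFinset (fun _ : Fin n => W),
          (f ((Fin.cons v w : Fin (n+1) → ℝ) i₁.succ) * g ((Fin.cons v w : Fin (n+1) → ℝ) 0))
            * probProd W l (n+1) (Fin.cons v w))
            = (l v : ℝ) * (g v * (A - f v)) / (N * (N - 1)) := by
        intro v hv
        have step : ∀ w ∈ Fintype.piFinset (fun _ : Fin n => W),
            (f ((Fin.cons v w : Fin (n+1) → ℝ) i₁.succ) * g ((Fin.cons v w : Fin (n+1) → ℝ) 0))
              * probProd W l (n+1) (Fin.cons v w)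
              = ((l v : ℝ) / N * g v) * (f (w i₁) * probProd W (dep l v) n w) := by
          intro w _
          rw [Fin.cons_zero, Fin.cons_succ, probProd_cons W l hv]; ring
        rw [Finset.sum_congr rfl step, ← Finset.mul_sum,
          probProd_marginal1 W n (dep l v) f i₁ (hdep v hv),
          sum_mul_dep W l f hv, deckSize_dep hv]
        push_cast
        rw [← hNdef, ← hA]
        field_simp
        try ring
      rw [Finset.sum_congr rfl h1, ← Finset.sum_div]
      have hsum : ∑ v ∈ W, (l v : ℝ) * (g v * (A - f v)) = A * B - C := by
        have e : ∀ v ∈ W, (l v : ℝ) * (g v * (A - f v))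
            = A * (g v * (l v : ℝ)) - f v * g v * (l v : ℝ) := fun v _ => by ring
        rw [Finset.sum_congr rfl e, Finset.sum_sub_distrib, ← Finset.mul_sum, ← hB, ← hC]
      rw [hsum]
    · -- both successors
      have hi : i₁ ≠ i₂ := fun h => hj (by rw [h])
      have h2n : 2 ≤ n := by
        by_contra h
        push_neg at h
        have e1 : (i₁ : ℕ) = (i₂ : ℕ) := by
          have := i₁.isLt; have := i₂.isLt; omega
        exact hi (Fin.ext e1)
      have h3 : (3 : ℤ) ≤ deckSize W l := by push_cast at hl; omega
      have h3' : (3 : ℝ) ≤ N := by rw [hNdef]; exact_mod_cast h3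
      have hN1 : N - 1 ≠ 0 := by intro h; nlinarith
      have hN2 : N - 2 ≠ 0 := by intro h; nlinarith
      rw [sum_piFinset_cons]
      have h1 : ∀ v ∈ W, (∑ w ∈ Fintype.piFinset (fun _ : Fin n => W),
          (f ((Fin.cons v w : Fin (n+1) → ℝ) i₁.succ) * g ((Fin.cons v w : Fin (n+1) → ℝ) i₂.succ))
            * probProd W l (n+1) (Fin.cons v w))
            = (l v : ℝ) * ((A - f v) * (B - g v) - (C - f v * g v))
                / (N * ((N - 1) * (N - 1 - 1))) := by
        intro v hv
        have step : ∀ w ∈ Fintype.piFinset (fun _ : Fin n => W),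
            (f ((Fin.cons v w : Fin (n+1) → ℝ) i₁.succ) * g ((Fin.cons v w : Fin (n+1) → ℝ) i₂.succ))
              * probProd W l (n+1) (Fin.cons v w)
              = ((l v : ℝ) / N) * ((f (w i₁) * g (w i₂)) * probProd W (dep l v) n w) := by
          intro w _
          rw [Fin.cons_succ, Fin.cons_succ, probProd_cons W l hv]; ring
        rw [Finset.sum_congr rfl step, ← Finset.mul_sum,
          ih (dep l v) f g i₁ i₂ hi (hdep v hv),
          sum_mul_dep W l f hv, sum_mul_dep W l g hv,
          sum_mul_dep W l (fun u => f u * g u) hv, deckSize_dep hv]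
        push_cast
        rw [← hNdef, ← hA, ← hB, ← hC]
        rw [div_mul_div_comm]
      rw [Finset.sum_congr rfl h1, ← Finset.sum_div]
      have hsum : ∑ v ∈ W, (l v : ℝ) * ((A - f v) * (B - g v) - (C - f v * g v))
          = (N - 2) * (A * B - C) := by
        have e : ∀ v ∈ W, (l v : ℝ) * ((A - f v) * (B - g v) - (C - f v * g v))
            = (A * B - C) * (l v : ℝ)
              - (A * (g v * (l v : ℝ)) + B * (f v * (l v : ℝ))
                  - 2 * (f v * g v * (l v : ℝ))) := fun v _ => by ring
        rw [Finset.sum_congr rfl e, Finset.sum_sub_distrib, Finset.sum_sub_distrib,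
          Finset.sum_add_distrib, ← Finset.mul_sum, ← Finset.mul_sum, ← Finset.mul_sum,
          ← Finset.mul_sum, ← deckSize_cast, ← hNdef, ← hA, ← hB, ← hC]
        ring
      rw [hsum]
      have hN2' : N - 1 - 1 ≠ 0 := by intro h; exact hN2 (by linarith)
      field_simp
      ring

lemma sum_tcChange_mul_eq_zero (W : Finset ℝ) (l : ℝ → ℤ) (hN : 2 ≤ deckSize W l) :
    ∑ v ∈ W, tcChange W l v * (l v : ℝ) = 0 := by
  have hN2 : (2 : ℝ) ≤ (deckSize W l : ℝ) := by exact_mod_cast hN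
  set N : ℝ := (deckSize W l : ℝ) with hNdef
  set R : ℝ := runningCount W l with hR
  have hN0 : N ≠ 0 := by intro h; rw [h] at hN2; norm_num at hN2
  have hN1 : N - 1 ≠ 0 := by intro h; nlinarith
  have hsum : ∑ v ∈ W, v * (l v : ℝ) = -R := by rw [hR, runningCount, neg_neg]
  have e : ∀ v ∈ W, tcChange W l v * (l v : ℝ)
      = (R * (l v : ℝ) + v * (l v : ℝ)) / (N - 1) - R * (l v : ℝ) / N := by
    intro v _
    rw [tcChange, ← hNdef, ← hR]
    ring
  rw [Finset.sum_congr rfl e, Finset.sum_sub_distrib, ← Finset.sum_div, ← Finset.sum_div,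
    Finset.sum_add_distrib, ← Finset.mul_sum, hsum, ← deckSize_cast, ← hNdef]
  field_simp
  ring

/-- **Lemma 8.** Let `W` be a finite set of real weights, `l` a count function with
`N = ∑ w ∈ W, l w ≥ 2`, `1 ≤ n ≤ N`, and `j₁ ≠ j₂` with `1 ≤ j₁, j₂ ≤ n`. Drawing
`n` cards in order without replacement (the ordered sequence `(w₁,…,w_n)` having
probability `∏_{m=1}^{n} l^{(w₁,…,w_{m-1})}(w_m)/(N-m+1)`), the expected value of
`f(w_{j₁})·f(w_{j₂})` equals `-σ₁²/(N-1)` where `σ₁² = ∑_{w ∈ W} f(w)²·l(w)/N`. -/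
theorem true_count_lemma8 (W : Finset ℝ) (l : ℝ → ℤ)
    (hN : 2 ≤ deckSize W l) (n : ℕ) (hn : 1 ≤ n)
    (hnN : (n : ℤ) ≤ deckSize W l) (j₁ j₂ : Fin n) (hj : j₁ ≠ j₂) :
    ∑ w ∈ Fintype.piFinset (fun _ : Fin n => W),
        (tcChange W l (w j₁) * tcChange W l (w j₂)) *
          ∏ m : Fin n,
            ((depletedCount l ((List.ofFn w).take m) (w m) : ℝ) /
              ((deckSize W l : ℝ) - ((m : ℕ) : ℝ)))
      = -(∑ v ∈ W, (tcChange W l v)^2 * (l v : ℝ) / (deckSize W l : ℝ)) /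
          ((deckSize W l : ℝ) - 1) := by
  have hN2 : (2 : ℝ) ≤ (deckSize W l : ℝ) := by exact_mod_cast hN
  have hN0 : (deckSize W l : ℝ) ≠ 0 := by intro h; rw [h] at hN2; norm_num at hN2
  have hN1 : (deckSize W l : ℝ) - 1 ≠ 0 := by intro h; nlinarith
  have key := probProd_marginal2 W n l (tcChange W l) (tcChange W l) j₁ j₂ hj hnN
  simp only [probProd] at key
  rw [key, sum_tcChange_mul_eq_zero W l hN]
  have hC : ∑ v ∈ W, tcChange W l v * tcChange W l v * (l v : ℝ)
      = ∑ v ∈ W, (tcChange W l v)^2 * (l v : ℝ) := by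
    refine Finset.sum_congr rfl fun v _ => by ring
  rw [hC, ← Finset.sum_div]
  field_simp
  try ring
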